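/- Let (a_j) be a sequence of integers with a_j ≥ b_j for all j ≥ 1, where b_j is the Sylvester sequence of 1 (b_1 = 2, b_{j+1} = b_j(b_j−1)+1). Then ∑_{j=1}^∞ log(1 + a_j²)/a_j converges and is less than 5/2. -/

import Mathlib

/-!
Since `x ↦ log (1 + x²) / x` decreases on `[2, ∞)`, each term is at most the corresponding term
for the Sylvester sequence itself. Its first four terms `log 5 / 2 + log 10 / 3 + log 50 / 7 +
log 1850 / 43` add up to less than `12 / 5`. From `1807` on the sequence grows at least by the
factor `1764 = 42²` at each step, and `log (1 + x²) / x ≤ 4 / √x`, so the remaining terms are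
dominated by `4 ∑ 42⁻ʲ⁻¹ = 4 / 41 < 1 / 10`.
-/

/-- The Sylvester sequence of 1: `2, 3, 7, 43, 1807, …`. -/
def sylvOne : ℕ → ℕ
  | 0 => 2
  | n + 1 => sylvOne n * (sylvOne n - 1) + 1

open Real Finset

namespace Real

theorem eight_div_five_lt_log_five : 8 / 5 < log 5 := by
  rw [lt_log_iff_exp_lt (by norm_num),
    ← pow_lt_pow_iff_left₀ (exp_pos _).le (by norm_num) (by norm_num : 5 ≠ 0), ← exp_nat_mul,
    show ((5 : ℕ) : ℝ) * (8 / 5) = ((8 : ℕ) : ℝ) by norm_num, ← exp_one_pow]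
  calc exp 1 ^ 8 < 2.7182818286 ^ 8 := by gcongr; exact exp_one_lt_d9
    _ < 5 ^ 5 := by norm_num

theorem log_five_lt : log 5 < 41 / 25 := by
  have h : log 5 = 2 * log 2 + log (5 / 4) := by
    rw [log_div (by norm_num) (by norm_num), show (4 : ℝ) = 2 ^ 2 by norm_num, log_pow]
    push_cast; ring
  linarith [log_two_lt_d9, log_le_sub_one_of_pos (show (0 : ℝ) < 5 / 4 by norm_num)]

theorem two_sub_two_div_le_log {t : ℝ} (ht : 5 ≤ t) : 2 - 2 / t ≤ log t := by
  have ht0 : 0 < t := by linarith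
  have hsplit : log t = log 5 + log (t / 5) := by
    rw [log_div ht0.ne' (by norm_num)]; ring
  have hquot : 1 - 5 / t ≤ log (t / 5) := by
    simpa using one_sub_inv_le_log_of_pos (show 0 < t / 5 by positivity)
  have hsmall : 3 / t ≤ 3 / 5 := div_le_div_of_nonneg_left (by norm_num) (by norm_num) ht
  have : 5 / t = 2 / t + 3 / t := by ring
  linarith [eight_div_five_lt_log_five]

end Real

noncomputable def logOneAddSqDiv (x : ℝ) : ℝ := log (1 + x ^ 2) / x

theorem logOneAddSqDiv_nonneg {x : ℝ} (hx : 0 ≤ x) : 0 ≤ logOneAddSqDiv x :=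
  div_nonneg (log_nonneg (le_add_of_nonneg_right (sq_nonneg x))) hx

theorem hasDerivAt_logOneAddSqDiv {x : ℝ} (hx : x ≠ 0) :
    HasDerivAt logOneAddSqDiv ((2 * x ^ 2 / (1 + x ^ 2) - log (1 + x ^ 2)) / x ^ 2) x := by
  have hnum : HasDerivAt (fun y : ℝ => log (1 + y ^ 2)) (2 * x / (1 + x ^ 2)) x := by
    simpa using ((hasDerivAt_pow 2 x).const_add 1).log (by positivity)
  exact (hnum.div (hasDerivAt_id' x) hx).congr_deriv (by field_simp)

theorem antitoneOn_logOneAddSqDiv : AntitoneOn logOneAddSqDiv (Set.Ici 2) := by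
  have hderiv : ∀ x ∈ Set.Ici (2 : ℝ), HasDerivAt logOneAddSqDiv
      ((2 * x ^ 2 / (1 + x ^ 2) - log (1 + x ^ 2)) / x ^ 2) x := fun x hx =>
    hasDerivAt_logOneAddSqDiv (by linarith [Set.mem_Ici.mp hx])
  refine antitoneOn_of_deriv_nonpos (convex_Ici 2)
    (fun x hx => (hderiv x hx).continuousAt.continuousWithinAt)
    (fun x hx => (hderiv x (interior_subset hx)).differentiableAt.differentiableWithinAt)
    (fun x hx => ?_)
  have hx : 2 ≤ x := interior_subset (s := Set.Ici (2 : ℝ)) hx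
  rw [(hderiv x hx).deriv]
  have hlog := two_sub_two_div_le_log (show 5 ≤ 1 + x ^ 2 by nlinarith)
  have hfrac : 2 * x ^ 2 / (1 + x ^ 2) = 2 - 2 / (1 + x ^ 2) := by
    field_simp; ring
  exact div_nonpos_of_nonpos_of_nonneg (by linarith) (sq_nonneg x)

theorem logOneAddSqDiv_le_four_div_sqrt {x : ℝ} (hx : 1 ≤ x) :
    logOneAddSqDiv x ≤ 4 / √x := by
  have hx0 : 0 < x := by linarith
  have hs : 0 < √x := sqrt_pos.mpr hx0
  have hlogx : log x ≤ 2 * (√x - 1) := by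
    have : log x = 2 * log √x := by
      rw [log_sqrt hx0.le]; ring
    linarith [log_le_sub_one_of_pos hs]
  have hlog : log (1 + x ^ 2) ≤ 4 * √x :=
    calc log (1 + x ^ 2) ≤ log (2 * x ^ 2) := log_le_log (by positivity) (by nlinarith)
      _ = log 2 + 2 * log x := by
        rw [log_mul (by norm_num) (by positivity), log_pow]; push_cast; ring
      _ ≤ 4 * √x := by
        linarith [log_le_sub_one_of_pos (show (0 : ℝ) < 2 by norm_num)]
  rw [logOneAddSqDiv, div_le_div_iff₀ hx0 hs]
  calc log (1 + x ^ 2) * √x ≤ 4 * √x * √x := by gcongr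
    _ = 4 * x := by rw [mul_assoc, mul_self_sqrt hx0.le]

theorem two_le_sylvOne (n : ℕ) : 2 ≤ sylvOne n := by
  induction n with
  | zero => exact le_rfl
  | succ k ih =>
    show 2 ≤ sylvOne k * (sylvOne k - 1) + 1
    have : 1 ≤ sylvOne k - 1 := by omega
    nlinarith

theorem pow_succ_lt_sylvOne_add {c n : ℕ} (h : c < sylvOne n) (k : ℕ) :
    c ^ (k + 1) < sylvOne (n + k) := by
  induction k with
  | zero => simpa using h
  | succ k ih =>
    show c ^ (k + 2) < sylvOne (n + k) * (sylvOne (n + k) - 1) + 1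
    rcases Nat.eq_zero_or_pos c with rfl | hc
    · simp
    have hcb : c ≤ sylvOne (n + k) - 1 := by
      have := Nat.le_self_pow (n := k + 1) (by omega) c
      omega
    calc c ^ (k + 2) = c ^ (k + 1) * c := pow_succ c (k + 1)
      _ ≤ sylvOne (n + k) * (sylvOne (n + k) - 1) := Nat.mul_le_mul ih.le hcb
      _ < _ := Nat.lt_succ_self _

theorem logOneAddSqDiv_sylvOne_add_four_le (j : ℕ) :
    logOneAddSqDiv (sylvOne (j + 4)) ≤ 4 / 42 * (1 / 42) ^ j := by
  have hgrowth : ((42 : ℝ) ^ (j + 1)) ^ 2 ≤ sylvOne (j + 4) := by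
    have h := pow_succ_lt_sylvOne_add (show 42 ^ 2 < sylvOne 4 by decide) j
    rw [add_comm 4 j, ← pow_mul, mul_comm, pow_mul] at h
    exact_mod_cast h.le
  have hsqrt : (42 : ℝ) ^ (j + 1) ≤ √(sylvOne (j + 4)) :=
    (le_sqrt (by positivity) (by positivity)).mpr hgrowth
  calc logOneAddSqDiv (sylvOne (j + 4)) ≤ 4 / √(sylvOne (j + 4)) :=
        logOneAddSqDiv_le_four_div_sqrt (by exact_mod_cast (two_le_sylvOne _).trans' one_le_two)
    _ ≤ 4 / (42 : ℝ) ^ (j + 1) := by gcongr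
    _ = 4 / 42 * (1 / 42) ^ j := by rw [one_div_pow]; ring

theorem sum_range_four_logOneAddSqDiv_sylvOne_lt :
    ∑ j ∈ range 4, logOneAddSqDiv (sylvOne j) < 12 / 5 := by
  have h10 : log 10 = log 2 + log 5 := by
    rw [show (10 : ℝ) = 2 * 5 by norm_num, log_mul (by norm_num) (by norm_num)]
  have h50 : log 50 = log 2 + 2 * log 5 := by
    rw [show (50 : ℝ) = 2 * 5 ^ 2 by norm_num, log_mul (by norm_num) (by norm_num), log_pow]
    norm_num
  have h1850 : log 1850 ≤ 11 * log 2 :=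
    calc log 1850 ≤ log (2 ^ 11) := log_le_log (by norm_num) (by norm_num)
      _ = 11 * log 2 := by rw [log_pow]; norm_num
  simp only [logOneAddSqDiv, sum_range_succ, range_one, sum_singleton, sylvOne, Nat.cast_ofNat,
    Nat.add_one_sub_one, mul_one, Nat.reduceAdd, Nat.reduceMul]
  norm_num
  linarith [log_two_lt_d9, log_five_lt]

theorem summable_logOneAddSqDiv_sylvOne : Summable fun j => logOneAddSqDiv (sylvOne j) :=
  (summable_nat_add_iff 4).mp <|
    ((summable_geometric_of_lt_one (by norm_num) (by norm_num)).mul_left (4 / 42)).of_nonneg_of_le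
      (fun j => logOneAddSqDiv_nonneg (Nat.cast_nonneg _)) logOneAddSqDiv_sylvOne_add_four_le

theorem tsum_logOneAddSqDiv_sylvOne_lt : ∑' j, logOneAddSqDiv (sylvOne j) < 5 / 2 := by
  have htail : ∑' j, logOneAddSqDiv (sylvOne (j + 4)) ≤ 4 / 41 :=
    calc ∑' j, logOneAddSqDiv (sylvOne (j + 4)) ≤ ∑' j : ℕ, 4 / 42 * (1 / 42 : ℝ) ^ j :=
          ((summable_nat_add_iff 4).mpr summable_logOneAddSqDiv_sylvOne).tsum_le_tsum
            logOneAddSqDiv_sylvOne_add_four_le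
            ((summable_geometric_of_lt_one (by norm_num) (by norm_num)).mul_left _)
      _ = 4 / 41 := by
        rw [tsum_mul_left, tsum_geometric_of_lt_one (by norm_num) (by norm_num)]; norm_num
  rw [← summable_logOneAddSqDiv_sylvOne.sum_add_tsum_nat_add 4]
  linarith [sum_range_four_logOneAddSqDiv_sylvOne_lt]

theorem sum_log_one_add_sq_div_lt (a : ℕ → ℕ) (ha : ∀ j, sylvOne j ≤ a j) :
    Summable (fun j : ℕ => Real.log (1 + (a j : ℝ)^2) / (a j : ℝ)) ∧
    ∑' j : ℕ, Real.log (1 + (a j : ℝ)^2) / (a j : ℝ) < 5 / 2 := by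
  have hle : ∀ j, logOneAddSqDiv (a j) ≤ logOneAddSqDiv (sylvOne j) := fun j => by
    have hb : (2 : ℝ) ≤ sylvOne j := by exact_mod_cast two_le_sylvOne j
    have hba : (sylvOne j : ℝ) ≤ a j := by exact_mod_cast ha j
    exact antitoneOn_logOneAddSqDiv hb (hb.trans hba) hba
  have hsum : Summable fun j => logOneAddSqDiv (a j) :=
    summable_logOneAddSqDiv_sylvOne.of_nonneg_of_le
      (fun j => logOneAddSqDiv_nonneg (Nat.cast_nonneg _)) hle
  exact ⟨hsum, (hsum.tsum_le_tsum hle summable_logOneAddSqDiv_sylvOne).trans_lt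
    tsum_logOneAddSqDiv_sylvOne_lt⟩
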